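/- A densely defined closed antilinear operator T on H is antilinear normal (i.e., TT^♯ = T^♯T) if and only if D(T) = D(T^♯) and ‖Tx‖ = ‖T^♯x‖ for all x ∈ D(T). -/

import Mathlib

open Classical
noncomputable section

variable {H K : Type*}
  [NormedAddCommGroup H] [InnerProductSpace ℂ H] [CompleteSpace H]
  [NormedAddCommGroup K] [InnerProductSpace ℂ K] [CompleteSpace K]

/-- `D` is a complex linear subspace of `H` (as a set). -/
def IsLinSubspace (D : Set H) : Prop :=
  (0 : H) ∈ D ∧ ∀ (a : ℂ) (x y : H), x ∈ D → y ∈ D → a • x + y ∈ D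

/-- `f` is (complex) linear on `D`. -/
def LinearOn (D : Set H) (f : H → K) : Prop :=
  ∀ (a : ℂ) (x y : H), x ∈ D → y ∈ D → f (a • x + y) = a • f x + f y

/-- `f` is antilinear (conjugate-linear) on `D`. -/
def AntilinearOn (D : Set H) (f : H → K) : Prop :=
  ∀ (a : ℂ) (x y : H), x ∈ D → y ∈ D → f (a • x + y) = (starRingEnd ℂ a) • f x + f y

/-- The operator with domain `D` given by `f` has closed graph, i.e. is a closed operator. -/
def HasClosedGraph (D : Set H) (f : H → K) : Prop :=
  IsClosed {p : H × K | p.1 ∈ D ∧ f p.1 = p.2}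

/-- `C` is a conjugation on `K`: an isometric antilinear involution. -/
def IsConjugation (C : K → K) : Prop :=
  (∀ (a : ℂ) (x y : K), C (a • x + y) = (starRingEnd ℂ a) • C x + C y) ∧
  (∀ x, C (C x) = x) ∧
  ∀ x y : K, (inner ℂ (C x) (C y) : ℂ) = inner ℂ y x

/-- Domain of the (linear) Hilbert space adjoint of the operator `(D, f)`. -/
def adjDom (D : Set H) (f : H → K) : Set K :=
  {y | ∃ u : H, ∀ x ∈ D, (inner ℂ (f x) y : ℂ) = inner ℂ x u}

/-- The (linear) Hilbert space adjoint of the operator `(D, f)`; `0` outside its domain.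
For a densely defined operator the vector `u` below is unique. -/
def adjFun (D : Set H) (f : H → K) : K → H := fun y =>
  if h : ∃ u : H, ∀ x ∈ D, (inner ℂ (f x) y : ℂ) = inner ℂ x u then h.choose else 0

/-- Domain of the antilinear adjoint `T^♯` of the operator `(D, f)`:
`y ∈ D(T^♯)` iff there is `u` with `conj ⟪f x, y⟫ = ⟪x, u⟫` for all `x ∈ D`. -/
def sharpDom (D : Set H) (f : H → K) : Set K :=
  {y | ∃ u : H, ∀ x ∈ D, (starRingEnd ℂ) (inner ℂ (f x) y : ℂ) = inner ℂ x u}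

/-- The antilinear adjoint `T^♯`; `0` outside its domain.
For a densely defined operator the vector `u` below is unique. -/
def sharpFun (D : Set H) (f : H → K) : K → H := fun y =>
  if h : ∃ u : H, ∀ x ∈ D, (starRingEnd ℂ) (inner ℂ (f x) y : ℂ) = inner ℂ x u then h.choose
  else 0

/-- Orthogonal complement (as a set) of a set. -/
def perpSet (S : Set K) : Set K := {y | ∀ z ∈ S, (inner ℂ z y : ℂ) = 0}

/-!
For antilinear `T` the antilinear adjoint is the real adjoint: `re ⟪T x, y⟫ = re ⟪x, T^♯ y⟫`.
Hence in the real Hilbert space `H ⊕ H` the graph of `T^♯` is the orthogonal complement of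
the rotated graph `J G(T)`, and von Neumann's theory applies verbatim: `T^♯` is closed and densely
defined with `T^♯♯ = T`, `1 + T^♯ T` maps `D(T^♯ T)` onto `H`, and so `D(T^♯ T)` is a core for `T`.
Everything is symmetric under `T ↔ T^♯`.

If `T` is normal, `‖T x‖² = ⟪x, T^♯ T x⟫ = ⟪x, T T^♯ x⟫ = ‖T^♯ x‖²` on `D(T^♯ T) = D(T T^♯)`, a
core for both `T` and `T^♯`; since both are closed, the equality of norms carries over from the
core to the closures, so `D(T) = D(T^♯)`. Conversely, polarization turns `‖T x‖ = ‖T^♯ x‖` into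
`⟪T x, T y⟫ = ⟪T^♯ x, T^♯ y⟫`, and this identifies `T^♯ T y` with `T T^♯ y` as soon as either
side is defined.
-/

open Filter Topology
open scoped InnerProductSpace ComplexConjugate

section Closed

omit [InnerProductSpace ℂ H] [CompleteSpace H] [InnerProductSpace ℂ K]

theorem cauchySeq_of_dist_eq {α β : Type*} [PseudoMetricSpace α] [PseudoMetricSpace β]
    {a : ℕ → α} {b : ℕ → β} (h : ∀ m n, dist (a m) (a n) = dist (b m) (b n))
    (hb : CauchySeq b) : CauchySeq a := by
  rw [Metric.cauchySeq_iff] at hb ⊢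
  simpa only [h] using hb

theorem HasClosedGraph.mem_and_norm_eq_of_tendsto {D : Set H} {g : H → K}
    (hg : HasClosedGraph D g) {s : ℕ → H} {t : ℕ → K} {x : H} {y : K} (hsD : ∀ n, s n ∈ D)
    (hs : Tendsto s atTop (𝓝 x)) (ht : Tendsto t atTop (𝓝 y))
    (hdist : ∀ m n, ‖g (s m) - g (s n)‖ = ‖t m - t n‖) (hnorm : ∀ n, ‖g (s n)‖ = ‖t n‖) :
    x ∈ D ∧ ‖g x‖ = ‖y‖ := by
  obtain ⟨z, hz⟩ := cauchySeq_tendsto_of_complete <|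
    cauchySeq_of_dist_eq (a := g ∘ s)
      (fun m n => by rw [dist_eq_norm, dist_eq_norm]; exact hdist m n) ht.cauchySeq
  obtain ⟨hx, rfl⟩ : x ∈ D ∧ g x = z :=
    hg.mem_of_tendsto (hs.prodMk_nhds hz) (Eventually.of_forall fun n => ⟨hsD n, rfl⟩)
  exact ⟨hx, tendsto_nhds_unique hz.norm (by simpa only [Function.comp_def, hnorm] using ht.norm)⟩

end Closed

section Sharp

omit [CompleteSpace H] [CompleteSpace K]

variable {D : Set H} {f g : H → K}

theorem IsLinSubspace.add_mem (hD : IsLinSubspace D) {x y : H} (hx : x ∈ D) (hy : y ∈ D) :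
    x + y ∈ D := by
  simpa using hD.2 1 x y hx hy

theorem IsLinSubspace.smul_mem (hD : IsLinSubspace D) (a : ℂ) {x : H} (hx : x ∈ D) :
    a • x ∈ D := by
  simpa using hD.2 a x 0 hx hD.1

def IsLinSubspace.toSubmodule (hD : IsLinSubspace D) : Submodule ℂ H where
  carrier := D
  add_mem' := hD.add_mem
  zero_mem' := hD.1
  smul_mem' := hD.smul_mem

theorem AntilinearOn.map_zero (hD : IsLinSubspace D) (hf : AntilinearOn D f) : f 0 = 0 := by
  simpa using hf 1 0 0 hD.1 hD.1

theorem AntilinearOn.map_add (hf : AntilinearOn D f) {x y : H} (hx : x ∈ D) (hy : y ∈ D) :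
    f (x + y) = f x + f y := by
  simpa using hf 1 x y hx hy

theorem AntilinearOn.map_sub (hf : AntilinearOn D f) {x y : H} (hx : x ∈ D) (hy : y ∈ D) :
    f (x - y) = f x - f y := by
  simpa [← sub_eq_neg_add] using hf (-1) y x hy hx

theorem AntilinearOn.map_smul (hD : IsLinSubspace D) (hf : AntilinearOn D f) (a : ℂ) {x : H}
    (hx : x ∈ D) : f (a • x) = conj a • f x := by
  simpa [hf.map_zero hD] using hf a x 0 hx hD.1

theorem AntilinearOn.map_real_smul (hD : IsLinSubspace D) (hf : AntilinearOn D f) (r : ℝ)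
    {x : H} (hx : x ∈ D) : f (r • x) = r • f x := by
  simpa [Complex.coe_smul] using hf.map_smul hD r hx

theorem IsLinSubspace.setOf_mem_and_map_mem {D' : Set K} (hD : IsLinSubspace D)
    (hD' : IsLinSubspace D') (hf : AntilinearOn D f) : IsLinSubspace {x | x ∈ D ∧ f x ∈ D'} :=
  ⟨⟨hD.1, hf.map_zero hD ▸ hD'.1⟩, fun a x y hx hy =>
    ⟨hD.2 a x y hx.1 hy.1, hf a x y hx.1 hy.1 ▸ hD'.2 _ _ _ hx.2 hy.2⟩⟩

theorem AntilinearOn.inner_map_eq_of_norm_eq (hD : IsLinSubspace D) (hf : AntilinearOn D f)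
    (hg : AntilinearOn D g) (h : ∀ x ∈ D, ‖f x‖ = ‖g x‖) {x y : H} (hx : x ∈ D) (hy : y ∈ D) :
    ⟪f x, f y⟫_ℂ = ⟪g x, g y⟫_ℂ := by
  have key (a : ℂ) : ‖conj a • f y + f x‖ = ‖conj a • g y + g x‖ := by
    rw [← hf a y x hy hx, ← hg a y x hy hx]
    exact h _ (hD.2 a y x hy hx)
  have e1 := key 1
  have e2 := key (-1)
  have e3 := key Complex.I
  have e4 := key (-Complex.I)
  simp only [map_one, map_neg, Complex.conj_I, neg_neg, one_smul, neg_smul] at e1 e2 e3 e4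
  rw [inner_eq_sum_norm_sq_div_four, inner_eq_sum_norm_sq_div_four]
  simp only [RCLike.I_to_complex, sub_eq_neg_add, add_comm (f x), add_comm (g x), e1, e2, e3, e4]

/-- `u` is a value of `T^♯` at `y`. -/
def SharpRel (D : Set H) (f : H → K) (y : K) (u : H) : Prop :=
  ∀ x ∈ D, conj ⟪f x, y⟫_ℂ = ⟪x, u⟫_ℂ

variable {y y' : K} {u u' : H}

theorem SharpRel.mem_sharpDom (h : SharpRel D f y u) : y ∈ sharpDom D f := ⟨u, h⟩

theorem sharpRel_sharpFun (hy : y ∈ sharpDom D f) : SharpRel D f y (sharpFun D f y) := by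
  have hy' : ∃ u, ∀ x ∈ D, conj ⟪f x, y⟫_ℂ = ⟪x, u⟫_ℂ := hy
  rw [sharpFun, dif_pos hy']
  exact hy'.choose_spec

theorem SharpRel.sharpFun_eq (hdense : Dense D) (h : SharpRel D f y u) : sharpFun D f y = u :=
  hdense.eq_of_inner_right ℂ fun x hx => (sharpRel_sharpFun h.mem_sharpDom x hx).symm.trans (h x hx)

theorem sharpRel_zero : SharpRel D f 0 0 := fun x _ => by simp

theorem SharpRel.smul_add (a : ℂ) (h : SharpRel D f y u) (h' : SharpRel D f y' u') :
    SharpRel D f (a • y + y') (conj a • u + u') := fun x hx => by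
  simp [h x hx, h' x hx]

theorem isLinSubspace_sharpDom : IsLinSubspace (sharpDom D f) :=
  ⟨sharpRel_zero.mem_sharpDom, fun a _ _ ⟨_, h⟩ ⟨_, h'⟩ => (SharpRel.smul_add a h h').mem_sharpDom⟩

theorem antilinearOn_sharpFun (hdense : Dense D) : AntilinearOn (sharpDom D f) (sharpFun D f) :=
  fun a _ _ hy hy' => ((sharpRel_sharpFun hy).smul_add a (sharpRel_sharpFun hy')).sharpFun_eq hdense

theorem isClosed_setOf_sharpRel : IsClosed {p : K × H | SharpRel D f p.1 p.2} := by
  simp only [SharpRel, Set.ofPred_forall]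
  exact isClosed_iInter fun x => isClosed_iInter fun _ => isClosed_eq (by fun_prop) (by fun_prop)

theorem hasClosedGraph_sharp (hdense : Dense D) : HasClosedGraph (sharpDom D f) (sharpFun D f) := by
  have hgraph : {p : K × H | p.1 ∈ sharpDom D f ∧ sharpFun D f p.1 = p.2}
      = {p | SharpRel D f p.1 p.2} := by
    ext ⟨y, u⟩
    exact ⟨fun ⟨hy, (hyu : sharpFun D f y = u)⟩ => hyu ▸ sharpRel_sharpFun hy,
      fun h => ⟨h.mem_sharpDom, h.sharpFun_eq hdense⟩⟩
  rw [HasClosedGraph, hgraph]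
  exact isClosed_setOf_sharpRel

end Sharp

section Normal

omit [CompleteSpace H]

variable {D : Set H} {f : H → H}

theorem norm_eq_norm_sharpFun_of_comm {x : H} (hx : x ∈ D)
    (hfx : f x ∈ sharpDom D f) (hx' : x ∈ sharpDom D f) (hsx : sharpFun D f x ∈ D)
    (hcomm : f (sharpFun D f x) = sharpFun D f (f x)) : ‖f x‖ = ‖sharpFun D f x‖ := by
  have h1 : ⟪f x, f x⟫_ℂ = ⟪x, sharpFun D f (f x)⟫_ℂ := by
    rw [← sharpRel_sharpFun hfx x hx, inner_conj_symm]
  have h2 : ⟪sharpFun D f x, sharpFun D f x⟫_ℂ = ⟪x, f (sharpFun D f x)⟫_ℂ := by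
    rw [← sharpRel_sharpFun hx' _ hsx, inner_conj_symm]
  rw [← sq_eq_sq₀ (norm_nonneg _) (norm_nonneg _), @norm_sq_eq_re_inner ℂ,
    @norm_sq_eq_re_inner ℂ, h1, h2, hcomm]

theorem sharpFun_comp_eq_of_norm_eq (hD : IsLinSubspace D)
    (hf : AntilinearOn D f) (hdense : Dense D) (hdom : sharpDom D f = D)
    (hnorm : ∀ x ∈ D, ‖f x‖ = ‖sharpFun D f x‖) {y : H} (hy : y ∈ D) (hsy : sharpFun D f y ∈ D) :
    f y ∈ sharpDom D f ∧ sharpFun D f (f y) = f (sharpFun D f y) := by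
  have hsf := antilinearOn_sharpFun (f := f) hdense
  rw [hdom] at hsf
  have hrel : SharpRel D f (f y) (f (sharpFun D f y)) := fun x hx => by
    rw [hf.inner_map_eq_of_norm_eq hD hsf hnorm hx hy, inner_conj_symm,
      ← sharpRel_sharpFun (hdom.symm ▸ hx) _ hsy, inner_conj_symm]
  exact ⟨hrel.mem_sharpDom, hrel.sharpFun_eq hdense⟩

end Normal

section Graph

omit [CompleteSpace H] [CompleteSpace K]

attribute [local instance] InnerProductSpace.complexToReal

variable {D : Set H} {f : H → K}

theorem real_inner_withLp_prod {E F : Type*} [NormedAddCommGroup E] [InnerProductSpace ℂ E]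
    [NormedAddCommGroup F] [InnerProductSpace ℂ F] (p q : WithLp 2 (E × F)) :
    ⟪p, q⟫_ℝ = (⟪p.fst, q.fst⟫_ℂ).re + (⟪p.snd, q.snd⟫_ℂ).re := rfl

def AntilinearOn.graph (hD : IsLinSubspace D) (hf : AntilinearOn D f) :
    Submodule ℝ (WithLp 2 (H × K)) where
  carrier := {p | p.fst ∈ D ∧ f p.fst = p.snd}
  add_mem' hp hq := ⟨hD.add_mem hp.1 hq.1, by simp [hf.map_add hp.1 hq.1, hp.2, hq.2]⟩
  zero_mem' := ⟨hD.1, by simp [hf.map_zero hD]⟩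
  smul_mem' r p hp := ⟨hD.toSubmodule.smul_of_tower_mem r hp.1,
    by simp [hf.map_real_smul hD r hp.1, hp.2]⟩

/-- `J G(T)` for the rotation `J (x, y) = (-y, x)`. -/
def AntilinearOn.rotatedGraph (hD : IsLinSubspace D) (hf : AntilinearOn D f) :
    Submodule ℝ (WithLp 2 (K × H)) where
  carrier := {p | p.snd ∈ D ∧ f p.snd = -p.fst}
  add_mem' hp hq := ⟨hD.add_mem hp.1 hq.1, by simp [hf.map_add hp.1 hq.1, hp.2, hq.2, add_comm]⟩
  zero_mem' := ⟨hD.1, by simp [hf.map_zero hD]⟩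
  smul_mem' r p hp := ⟨hD.toSubmodule.smul_of_tower_mem r hp.1,
    by simp [hf.map_real_smul hD r hp.1, hp.2]⟩

variable (hD : IsLinSubspace D) (hf : AntilinearOn D f)

theorem AntilinearOn.isClosed_graph (hclosed : HasClosedGraph D f) :
    IsClosed (hf.graph hD : Set (WithLp 2 (H × K))) :=
  hclosed.preimage (WithLp.prod_continuous_ofLp 2 H K)

theorem AntilinearOn.isClosed_rotatedGraph (hclosed : HasClosedGraph D f) :
    IsClosed (hf.rotatedGraph hD : Set (WithLp 2 (K × H))) :=
  hclosed.preimage ((WithLp.continuous_snd 2 K H).prodMk (WithLp.continuous_fst 2 K H).neg)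

theorem AntilinearOn.mem_rotatedGraph_orthogonal_iff {p : WithLp 2 (K × H)} :
    p ∈ (hf.rotatedGraph hD)ᗮ ↔ SharpRel D f p.fst p.snd := by
  rw [Submodule.mem_orthogonal]
  constructor
  · intro h x hx
    -- orthogonality to `J (x, T x)` and `J (i x, T (i x))` gives the real and imaginary parts
    have h1 := h (WithLp.toLp 2 (-f x, x)) ⟨hx, (neg_neg _).symm⟩
    have h2 := h (WithLp.toLp 2 (-f (Complex.I • x), Complex.I • x))
      ⟨hD.smul_mem _ hx, (neg_neg _).symm⟩
    rw [hf.map_smul hD _ hx, Complex.conj_I, neg_smul, neg_neg] at h2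
    simp only [real_inner_withLp_prod, WithLp.toLp_fst, WithLp.toLp_snd, inner_neg_left,
      inner_smul_left, Complex.conj_I, Complex.neg_re, Complex.mul_re, Complex.neg_im,
      Complex.I_re, Complex.I_im] at h1 h2
    apply Complex.ext <;> simp only [Complex.conj_re, Complex.conj_im] <;> linarith
  · rintro h q ⟨hq, hfq⟩
    have := h q.snd hq
    rw [hfq, inner_neg_left, map_neg] at this
    rw [real_inner_withLp_prod, ← this, Complex.neg_re, Complex.conj_re, add_neg_cancel]

end Graph

section Hilbert

attribute [local instance] InnerProductSpace.complexToReal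

variable {D : Set H}

theorem AntilinearOn.mem_of_forall_sharpRel {f : H → K} (hD : IsLinSubspace D)
    (hf : AntilinearOn D f) (hclosed : HasClosedGraph D f) {x : H} {v : K}
    (h : ∀ y u, SharpRel D f y u → (⟪y, v⟫_ℂ).re = (⟪u, x⟫_ℂ).re) : x ∈ D ∧ f x = v := by
  have := (hf.isClosed_rotatedGraph hD hclosed).completeSpace_coe
  have hmem : WithLp.toLp 2 (-v, x) ∈ (hf.rotatedGraph hD)ᗮᗮ := by
    refine (Submodule.mem_orthogonal _ _).2 fun s hs => ?_
    have hs := h _ _ ((hf.mem_rotatedGraph_orthogonal_iff hD).1 hs)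
    simp only [real_inner_withLp_prod, WithLp.toLp_fst, WithLp.toLp_snd, inner_neg_right,
      Complex.neg_re]
    linarith
  rw [Submodule.orthogonal_orthogonal] at hmem
  exact ⟨hmem.1, neg_neg v ▸ hmem.2⟩

theorem AntilinearOn.dense_sharpDom {f : H → K} (hD : IsLinSubspace D) (hf : AntilinearOn D f)
    (hclosed : HasClosedGraph D f) : Dense (sharpDom D f) := by
  let S := (isLinSubspace_sharpDom (D := D) (f := f)).toSubmodule
  change Dense (S : Set K)
  rw [Submodule.dense_iff_topologicalClosure_eq_top, Submodule.topologicalClosure_eq_top_iff,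
    Submodule.eq_bot_iff]
  intro z hz
  have h := hf.mem_of_forall_sharpRel hD hclosed (x := 0) (v := z) fun y u hyu => by
    rw [(Submodule.mem_orthogonal S z).1 hz y hyu.mem_sharpDom, inner_zero_right]
  rw [← h.2, hf.map_zero hD]

structure IsClosedAntilinearOp (D : Set H) (f : H → K) : Prop where
  isLinSubspace : IsLinSubspace D
  antilinearOn : AntilinearOn D f
  dense : Dense D
  hasClosedGraph : HasClosedGraph D f

namespace IsClosedAntilinearOp

theorem sharp {f : H → K} (hT : IsClosedAntilinearOp D f) :
    IsClosedAntilinearOp (sharpDom D f) (sharpFun D f) :=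
  ⟨isLinSubspace_sharpDom, antilinearOn_sharpFun hT.dense,
    hT.antilinearOn.dense_sharpDom hT.isLinSubspace hT.hasClosedGraph,
    hasClosedGraph_sharp hT.dense⟩

theorem sharpRel_sharp_iff {f : H → K} (hT : IsClosedAntilinearOp D f) {x : H} {v : K} :
    SharpRel (sharpDom D f) (sharpFun D f) x v ↔ x ∈ D ∧ f x = v := by
  refine ⟨fun h => hT.antilinearOn.mem_of_forall_sharpRel hT.isLinSubspace hT.hasClosedGraph
    fun y u hyu => ?_, ?_⟩
  · rw [← h y hyu.mem_sharpDom, hyu.sharpFun_eq hT.dense, Complex.conj_re]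
  · rintro ⟨hx, rfl⟩ y hy
    rw [inner_conj_symm, ← sharpRel_sharpFun hy x hx, inner_conj_symm]

theorem sharpDom_sharp {f : H → K} (hT : IsClosedAntilinearOp D f) :
    sharpDom (sharpDom D f) (sharpFun D f) = D :=
  Set.ext fun _ => ⟨fun ⟨_, h⟩ => (hT.sharpRel_sharp_iff.1 h).1,
    fun hx => (hT.sharpRel_sharp_iff.2 ⟨hx, rfl⟩).mem_sharpDom⟩

theorem sharpFun_sharp {f : H → K} (hT : IsClosedAntilinearOp D f) {x : H} (hx : x ∈ D) :
    sharpFun (sharpDom D f) (sharpFun D f) x = f x :=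
  (hT.sharpRel_sharp_iff.2 ⟨hx, rfl⟩).sharpFun_eq hT.sharp.dense

variable {f : H → H}

theorem exists_add_sharpFun_eq (hT : IsClosedAntilinearOp D f) (z : H) :
    ∃ x ∈ D, f x ∈ sharpDom D f ∧ x + sharpFun D f (f x) = z := by
  obtain ⟨hD, hf, hdense, hclosed⟩ := hT
  have := (hf.isClosed_rotatedGraph hD hclosed).completeSpace_coe
  obtain ⟨q, ⟨hqD, hfq⟩, s, hs, hsum⟩ :=
    (hf.rotatedGraph hD).exists_add_mem_mem_orthogonal (WithLp.toLp 2 (0, z))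
  have hrel := (hf.mem_rotatedGraph_orthogonal_iff hD).1 hs
  have h1 : s.fst = f q.snd := by
    rw [hfq]; exact eq_neg_of_add_eq_zero_right (congrArg WithLp.fst hsum).symm
  rw [h1] at hrel
  refine ⟨q.snd, hqD, hrel.mem_sharpDom, ?_⟩
  rw [hrel.sharpFun_eq hdense, ← WithLp.add_snd, ← hsum]
  rfl

theorem exists_seq_tendsto (hT : IsClosedAntilinearOp D f) {x : H} (hx : x ∈ D) :
    ∃ s : ℕ → H, (∀ n, s n ∈ D ∧ f (s n) ∈ sharpDom D f) ∧
      Tendsto s atTop (𝓝 x) ∧ Tendsto (f ∘ s) atTop (𝓝 (f x)) := by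
  have ⟨hD, hf, _, hclosed⟩ := hT
  have hS : IsLinSubspace {x | x ∈ D ∧ f x ∈ sharpDom D f} :=
    hD.setOf_mem_and_map_mem isLinSubspace_sharpDom hf
  have hfS : AntilinearOn {x | x ∈ D ∧ f x ∈ sharpDom D f} f :=
    fun a y z hy hz => hf a y z hy.1 hz.1
  set M := (hfS.graph hS).topologicalClosure
  suffices h : WithLp.toLp 2 (x, f x) ∈ M by
    rw [← SetLike.mem_coe, Submodule.topologicalClosure_coe, mem_closure_iff_seq_limit] at h
    obtain ⟨p, hp, hlim⟩ := h
    refine ⟨fun n => (p n).fst, fun n => (hp n).1,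
      (WithLp.continuous_fst 2 H H).tendsto _ |>.comp hlim, ?_⟩
    exact ((WithLp.continuous_snd 2 H H).tendsto _ |>.comp hlim).congr fun n => (hp n).2.symm
  have := M.isClosed_topologicalClosure.completeSpace_coe
  obtain ⟨m, hm, q, hq, hsum⟩ := M.exists_add_mem_mem_orthogonal (WithLp.toLp 2 (x, f x))
  have hqG : q ∈ hf.graph hD := by
    have hMG : M ≤ hf.graph hD := Submodule.topologicalClosure_minimal _
      (fun p hp => ⟨hp.1.1, hp.2⟩) (hf.isClosed_graph hD hclosed)
    rw [eq_sub_of_add_eq' hsum.symm]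
    exact (hf.graph hD).sub_mem ⟨hx, rfl⟩ (hMG hm)
  obtain ⟨w, hw, hfw, hwq⟩ := hT.exists_add_sharpFun_eq q.fst
  have horth := (Submodule.mem_orthogonal M q).1 hq _
    ((hfS.graph hS).le_topologicalClosure ⟨⟨hw, hfw⟩, rfl⟩ : WithLp.toLp 2 (w, f w) ∈ M)
  simp only [real_inner_withLp_prod, WithLp.toLp_fst, WithLp.toLp_snd] at horth
  have hadj : ⟪f w, q.snd⟫_ℂ = ⟪q.fst, sharpFun D f (f w)⟫_ℂ := by
    rw [← hqG.2, ← sharpRel_sharpFun hfw _ hqG.1, inner_conj_symm]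
  have hq1 : q.fst = 0 := by
    refine inner_self_eq_zero.1 (Complex.ext ?_ (inner_self_im (𝕜 := ℂ) q.fst))
    calc (⟪q.fst, q.fst⟫_ℂ).re = (⟪q.fst, w + sharpFun D f (f w)⟫_ℂ).re := by rw [hwq]
      _ = (⟪w, q.fst⟫_ℂ).re + (⟪f w, q.snd⟫_ℂ).re := by
        rw [inner_add_right, Complex.add_re, hadj, ← inner_conj_symm q.fst w, Complex.conj_re]
      _ = 0 := horth
  have hq2 : q.snd = 0 := by rw [← hqG.2, hq1, hf.map_zero hD]
  have hq : q = 0 := (WithLp.ext_iff 2).2 (Prod.ext hq1 hq2)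
  rwa [hsum, hq, add_zero]

theorem mem_sharpDom_and_norm_eq_of_core (hT : IsClosedAntilinearOp D f)
    (hcore : ∀ x ∈ D, f x ∈ sharpDom D f → x ∈ sharpDom D f ∧ ‖f x‖ = ‖sharpFun D f x‖)
    {x : H} (hx : x ∈ D) : x ∈ sharpDom D f ∧ ‖f x‖ = ‖sharpFun D f x‖ := by
  obtain ⟨s, hs, hsx, hfs⟩ := hT.exists_seq_tendsto hx
  have hsD (n : ℕ) : s n ∈ sharpDom D f := (hcore _ (hs n).1 (hs n).2).1
  have hdist (m n : ℕ) :
      ‖sharpFun D f (s m) - sharpFun D f (s n)‖ = ‖f (s m) - f (s n)‖ := by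
    have hfsub : f (s m - s n) ∈ sharpDom D f := by
      rw [hT.antilinearOn.map_sub (hs m).1 (hs n).1]
      exact isLinSubspace_sharpDom.toSubmodule.sub_mem (hs m).2 (hs n).2
    rw [← (antilinearOn_sharpFun hT.dense).map_sub (hsD m) (hsD n),
      ← hT.antilinearOn.map_sub (hs m).1 (hs n).1]
    exact (hcore _ (hT.isLinSubspace.toSubmodule.sub_mem (hs m).1 (hs n).1) hfsub).2.symm
  obtain ⟨hxD, hnorm⟩ := (hasClosedGraph_sharp hT.dense).mem_and_norm_eq_of_tendsto hsD hsx hfs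
    hdist fun n => (hcore _ (hs n).1 (hs n).2).2.symm
  exact ⟨hxD, hnorm.symm⟩

theorem sharpDom_subset_of_core (hT : IsClosedAntilinearOp D f)
    (hcore : ∀ y ∈ sharpDom D f, sharpFun D f y ∈ D → y ∈ D ∧ ‖f y‖ = ‖sharpFun D f y‖) :
    sharpDom D f ⊆ D := by
  intro y hy
  rw [← hT.sharpDom_sharp]
  refine (hT.sharp.mem_sharpDom_and_norm_eq_of_core (fun z hz hsz => ?_) hy).1
  rw [hT.sharpDom_sharp] at hsz ⊢
  obtain ⟨hzD, hnorm⟩ := hcore z hz hsz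
  rw [hT.sharpFun_sharp hzD, hnorm]
  exact ⟨hzD, rfl⟩

theorem comp_sharpFun_eq_of_norm_eq (hT : IsClosedAntilinearOp D f) (hdom : sharpDom D f = D)
    (hnorm : ∀ x ∈ D, ‖f x‖ = ‖sharpFun D f x‖) {y : H} (hy : y ∈ D)
    (hfy : f y ∈ sharpDom D f) : sharpFun D f y ∈ D ∧ f (sharpFun D f y) = sharpFun D f (f y) := by
  have h := sharpFun_comp_eq_of_norm_eq hT.sharp.isLinSubspace hT.sharp.antilinearOn
    hT.sharp.dense (by rw [hT.sharpDom_sharp, hdom])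
    (fun x hx => by rw [hdom] at hx; rw [hT.sharpFun_sharp hx, hnorm x hx]) (hdom ▸ hy)
    (by rwa [hT.sharpFun_sharp hy])
  rw [hT.sharpDom_sharp, hT.sharpFun_sharp hy] at h
  rw [← hT.sharpFun_sharp h.1]
  exact h

end IsClosedAntilinearOp

end Hilbert

/-- A densely defined closed antilinear operator `T = (D, f)` on `H` is
antilinear normal (`TT^♯ = T^♯T`, with equality of the natural composition domains) iff
`D(T) = D(T^♯)` and `‖Tx‖ = ‖T^♯x‖` for all `x ∈ D(T)`. -/
theorem antilinear_normal_iff_norm_eq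
    (D : Set H) (f : H → H)
    (hsub : IsLinSubspace D) (hanti : AntilinearOn D f) (hdense : Dense D)
    (hclosed : HasClosedGraph D f) :
    ({y : H | y ∈ sharpDom D f ∧ sharpFun D f y ∈ D}
        = {x : H | x ∈ D ∧ f x ∈ sharpDom D f} ∧
      ∀ y ∈ {y : H | y ∈ sharpDom D f ∧ sharpFun D f y ∈ D},
        f (sharpFun D f y) = sharpFun D f (f y)) ↔
    (sharpDom D f = D ∧ ∀ x ∈ D, ‖f x‖ = ‖sharpFun D f x‖) := by
  have hT : IsClosedAntilinearOp D f := ⟨hsub, hanti, hdense, hclosed⟩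
  constructor
  · rintro ⟨hdom, hcomm⟩
    have hcore : ∀ x ∈ D, f x ∈ sharpDom D f → x ∈ sharpDom D f ∧ ‖f x‖ = ‖sharpFun D f x‖ := by
      intro x hx hfx
      obtain ⟨hx', hsx⟩ : x ∈ {y | y ∈ sharpDom D f ∧ sharpFun D f y ∈ D} := hdom ▸ ⟨hx, hfx⟩
      exact ⟨hx', norm_eq_norm_sharpFun_of_comm hx hfx hx' hsx (hcomm x ⟨hx', hsx⟩)⟩
    have hD := fun x (hx : x ∈ D) => hT.mem_sharpDom_and_norm_eq_of_core hcore hx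
    refine ⟨(hT.sharpDom_subset_of_core fun y hy hsy => ?_).antisymm fun x hx => (hD x hx).1,
      fun x hx => (hD x hx).2⟩
    obtain ⟨hyD, hfy⟩ : y ∈ {x | x ∈ D ∧ f x ∈ sharpDom D f} := hdom ▸ ⟨hy, hsy⟩
    exact ⟨hyD, (hcore y hyD hfy).2⟩
  · rintro ⟨hdom, hnorm⟩
    have hforth {y} := sharpFun_comp_eq_of_norm_eq hsub hanti hdense hdom hnorm (y := y)
    refine ⟨Set.ext fun y => ⟨fun ⟨hy, hsy⟩ => ?_, fun ⟨hy, hfy⟩ => ?_⟩, fun y ⟨hy, hsy⟩ => ?_⟩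
    · rw [hdom] at hy
      exact ⟨hy, (hforth hy hsy).1⟩
    · exact ⟨by rwa [hdom], (hT.comp_sharpFun_eq_of_norm_eq hdom hnorm hy hfy).1⟩
    · rw [hdom] at hy
      exact (hforth hy hsy).2.symm
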